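/- arXiv:1608.05065 — 4 statements merged into one kernel-verified Lean document; each statement's English description precedes it below -/
import Mathlib

section
/- For any quasi-order Q, any function 𝒜 : ℕ^ℕ → Q, and any oracle C ∈ ℕ^ℕ, the function 𝔅^C(𝒜) : ℕ^ℕ → Q^ℕ defined by 𝔅^C(𝒜)(X)(e) = 𝒜(PRec_e(C ⊕ X)) satisfies 𝔄(𝔅^C(𝒜)) ≡_w 𝒜, i.e., 𝔄(𝔅^C(𝒜)) and 𝒜 are Q-Wadge equivalent. -/
set_option linter.unusedVariables false
open scoped Classical

namespace MO

/-- Oracle evaluation `Φ_e^X(n)`: run code `e` on input `n` paired with a finite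
approximation `X↾s` of the oracle, for the least stage `s` at which it halts. -/
def OracleEval (e : ℕ) (X : ℕ → ℕ) (n : ℕ) : Part ℕ :=
  Nat.rfindOpt fun s =>
    Nat.Partrec.Code.evaln s (Denumerable.ofNat Nat.Partrec.Code e)
      (Nat.pair n (Encodable.encode (List.ofFn fun i : Fin s => X i)))

/-- `X ≤_T Y` via index `e`. -/
def TRedVia (e : ℕ) (X Y : ℕ → ℕ) : Prop := ∀ n, OracleEval e Y n = Part.some (X n)

/-- Turing reducibility `X ≤_T Y`. -/
def TRed (X Y : ℕ → ℕ) : Prop := ∃ e, TRedVia e X Y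

/-- `X ≡_T Y` via the pair of indices `(i, j)`. -/
def TEquivVia (i j : ℕ) (X Y : ℕ → ℕ) : Prop := TRedVia i X Y ∧ TRedVia j Y X

/-- `φ` is computable from the oracle `C`. -/
def ComputableIn (C : ℕ → ℕ) (φ : ℕ → ℕ) : Prop := ∃ e, TRedVia e φ C

/-- Effective join `C ⊕ X`. -/
def oplus (C X : ℕ → ℕ) : ℕ → ℕ := fun n => if n % 2 = 0 then C (n / 2) else X (n / 2)

variable {Q : Type*} [Preorder Q]

/-- `A ≤_m B` (`Q`-valued) via the (total) computable function with index `e`. -/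
def MRedVia (e : ℕ) (A B : ℕ → Q) : Prop :=
  ∀ n, ∃ m, m ∈ (Denumerable.ofNat Nat.Partrec.Code e).eval n ∧ A n ≤ B m

/-- `A ≡_m B` via the pair of indices `(i, j)`. -/
def MEquivVia (i j : ℕ) (A B : ℕ → Q) : Prop := MRedVia i A B ∧ MRedVia j B A

/-- `Q`-many-one reducibility relative to the oracle `C`:  `A ≤_m^C B`. -/
def QmRedIn (C : ℕ → ℕ) (A B : ℕ → Q) : Prop :=
  ∃ φ : ℕ → ℕ, ComputableIn C φ ∧ ∀ n, A n ≤ B (φ n)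

/-- `f ≤▽_m g`: many-one reducibility on a cone. -/
def ConeLE (f g : (ℕ → ℕ) → ℕ → Q) : Prop :=
  ∃ C, ∀ X, TRed C X → QmRedIn C (f X) (g X)

/-- `f` is uniformly `(≤_T, ≤_m)`-order preserving. -/
def UOP (f : (ℕ → ℕ) → ℕ → Q) : Prop :=
  ∃ u : ℕ → ℕ, Computable u ∧
    ∀ e X Y, TRedVia e X Y → MRedVia (u e) (f X) (f Y)

/-- `f` is uniformly `(≡_T, ≡_m)`-invariant. -/
def UI (f : (ℕ → ℕ) → ℕ → Q) : Prop :=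
  ∃ u : ℕ × ℕ → ℕ × ℕ, Computable u ∧
    ∀ i j X Y, TEquivVia i j X Y →
      MEquivVia (u (i, j)).1 (u (i, j)).2 (f X) (f Y)

/-- `𝔄(f)(n⌢X) = f(X)(n)`. -/
def Afr (f : (ℕ → ℕ) → ℕ → Q) : (ℕ → ℕ) → Q :=
  fun Z => f (fun k => Z (k + 1)) (Z 0)

/-- `Q`-Wadge reducibility between `Q`-valued functions on Baire space. -/
def WRed (A B : (ℕ → ℕ) → Q) : Prop :=
  ∃ θ : (ℕ → ℕ) → ℕ → ℕ, Continuous θ ∧ ∀ X, A X ≤ B (θ X)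

/-- Codes for primitive recursive functionals with one oracle. -/
inductive PRCode
  | zero | succ | left | right | oracle
  | pair (a b : PRCode) | comp (a b : PRCode) | prec (a b : PRCode)

/-- Evaluation of a primitive recursive functional code with oracle `C`. -/
def PRCode.eval (C : ℕ → ℕ) : PRCode → ℕ → ℕ
  | .zero => fun _ => 0
  | .succ => Nat.succ
  | .left => fun n => n.unpair.1
  | .right => fun n => n.unpair.2
  | .oracle => C
  | .pair a b => fun n => Nat.pair (eval C a n) (eval C b n)
  | .comp a b => fun n => eval C a (eval C b n)
  | .prec a b => fun n =>
      Nat.rec (eval C a n.unpair.1)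
        (fun m ih => eval C b (Nat.pair n.unpair.1 (Nat.pair m ih))) n.unpair.2

/-- A surjective numbering of `PRCode`. -/
def PRCode.ofNat : ℕ → PRCode
  | 0 => .zero
  | 1 => .succ
  | 2 => .left
  | 3 => .right
  | 4 => .oracle
  | n + 5 =>
    have hm : n / 3 < n + 5 := lt_of_le_of_lt (Nat.div_le_self n 3) (by omega)
    have _h1 : (n / 3).unpair.1 < n + 5 := lt_of_le_of_lt (Nat.unpair_left_le _) hm
    have _h2 : (n / 3).unpair.2 < n + 5 := lt_of_le_of_lt (Nat.unpair_right_le _) hm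
    match n % 3 with
    | 0 => .pair (ofNat (n / 3).unpair.1) (ofNat (n / 3).unpair.2)
    | 1 => .comp (ofNat (n / 3).unpair.1) (ofNat (n / 3).unpair.2)
    | _ => .prec (ofNat (n / 3).unpair.1) (ofNat (n / 3).unpair.2)

/-- The `e`-th primitive recursive functional `PRec_e`. -/
def PRec (e : ℕ) (X : ℕ → ℕ) : ℕ → ℕ := (PRCode.ofNat e).eval X

/-- `𝔅^C(𝒜)(X)(e) = 𝒜(PRec_e(C ⊕ X))`. -/
def Bfr (C : ℕ → ℕ) (A : (ℕ → ℕ) → Q) : (ℕ → ℕ) → ℕ → Q :=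
  fun X e => A (PRec e (oplus C X))

/-! Reading the first entry of `Z` as an index, `Z ↦ PRec (Z 0) (C ⊕ tail Z)` reduces
`𝔄(𝔅^C(𝒜))` to `𝒜` with equality of values; it is continuous because `Z 0` is locally
constant and every `PRec e` is continuous, each output value depending on finitely many oracle
values. Conversely, `X ↦ e⌢X` reduces `𝒜` to `𝔄(𝔅^C(𝒜))` for an index `e` of the
projection `C ⊕ X ↦ X`, which exists because `n ↦ 2n + 1` is primitive recursive and
`PRCode.ofNat` is onto. -/

theorem continuous_apply_of_discreteTopology {α β γ : Type*} [TopologicalSpace α]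
    [TopologicalSpace β] [DiscreteTopology β] [TopologicalSpace γ] {f : α → β → γ} {g : α → β}
    (hf : ∀ b, Continuous (f · b)) (hg : Continuous g) :
    Continuous fun a => f a (g a) :=
  ((continuous_prod_of_discrete_right (f := Function.uncurry f)).2 hf).comp
    (continuous_id.prodMk hg)

theorem continuous_oplus (C : ℕ → ℕ) : Continuous (oplus C) := by
  refine continuous_pi fun n => ?_
  by_cases h : n % 2 = 0
  · simpa only [oplus, h, if_true] using continuous_const
  · simpa only [oplus, h, if_false] using continuous_apply (n / 2)

theorem continuous_stream_tail {α : Type*} [TopologicalSpace α] :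
    @Continuous (ℕ → α) (ℕ → α) _ _ Stream'.tail :=
  continuous_pi fun n => continuous_apply (n + 1)

theorem continuous_stream_cons {α : Type*} [TopologicalSpace α] (a : α) :
    @Continuous (ℕ → α) (ℕ → α) _ _ (Stream'.cons a) := by
  refine continuous_pi fun n => ?_
  cases n with
  | zero => exact continuous_const
  | succ k => exact continuous_apply k

theorem PRCode.continuous_eval (c : PRCode) (n : ℕ) :
    Continuous fun X : ℕ → ℕ => c.eval X n := by
  induction c generalizing n with
  | zero | succ | left | right => exact continuous_const
  | oracle => exact continuous_apply n
  | pair a b iha ihb =>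
    exact (continuous_of_discreteTopology (f := fun p : ℕ × ℕ => Nat.pair p.1 p.2)).comp
      ((iha n).prodMk (ihb n))
  | comp a b iha ihb =>
    exact continuous_apply_of_discreteTopology (f := fun X => a.eval X) iha (ihb n)
  | prec a b iha ihb =>
    change Continuous fun X => Nat.rec (motive := fun _ => ℕ) (a.eval X n.unpair.1)
      (fun m ih => b.eval X (Nat.pair n.unpair.1 (Nat.pair m ih))) n.unpair.2
    induction n.unpair.2 with
    | zero => exact iha _
    | succ m ih =>
      exact continuous_apply_of_discreteTopology (f := fun X => b.eval X) ihb
        ((continuous_of_discreteTopology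
          (f := fun k => Nat.pair n.unpair.1 (Nat.pair m k))).comp ih)

theorem continuous_PRec (e : ℕ) : Continuous (PRec e) :=
  continuous_pi (PRCode.ofNat e).continuous_eval

theorem PRCode.exists_eval_eq_of_primrec {f : ℕ → ℕ} (hf : Nat.Primrec f) :
    ∃ c : PRCode, ∀ X, c.eval X = f := by
  induction hf with
  | zero => exact ⟨.zero, fun _ => rfl⟩
  | succ => exact ⟨.succ, fun _ => rfl⟩
  | left => exact ⟨.left, fun _ => rfl⟩
  | right => exact ⟨.right, fun _ => rfl⟩
  | pair _ _ ihf ihg =>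
    obtain ⟨⟨a, ha⟩, ⟨b, hb⟩⟩ := And.intro ihf ihg
    exact ⟨.pair a b, fun X => by funext n; simp only [PRCode.eval, ha, hb]⟩
  | comp _ _ ihf ihg =>
    obtain ⟨⟨a, ha⟩, ⟨b, hb⟩⟩ := And.intro ihf ihg
    exact ⟨.comp a b, fun X => by funext n; simp only [PRCode.eval, ha, hb]⟩
  | prec _ _ ihf ihg =>
    obtain ⟨⟨a, ha⟩, ⟨b, hb⟩⟩ := And.intro ihf ihg
    exact ⟨.prec a b, fun X => by funext n; simp only [PRCode.eval, ha, hb]⟩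

theorem PRCode.ofNat_surjective : Function.Surjective PRCode.ofNat := by
  intro c
  induction c with
  | zero => exact ⟨0, by rw [PRCode.ofNat]⟩
  | succ => exact ⟨1, by rw [PRCode.ofNat]⟩
  | left => exact ⟨2, by rw [PRCode.ofNat]⟩
  | right => exact ⟨3, by rw [PRCode.ofNat]⟩
  | oracle => exact ⟨4, by rw [PRCode.ofNat]⟩
  | pair a b iha ihb =>
    obtain ⟨⟨i, rfl⟩, ⟨j, rfl⟩⟩ := And.intro iha ihb
    exact ⟨3 * Nat.pair i j + 5, by rw [PRCode.ofNat]; simp⟩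
  | comp a b iha ihb =>
    obtain ⟨⟨i, rfl⟩, ⟨j, rfl⟩⟩ := And.intro iha ihb
    exact ⟨3 * Nat.pair i j + 1 + 5, by rw [PRCode.ofNat]; simp [Nat.mul_add_div]⟩
  | prec a b iha ihb =>
    obtain ⟨⟨i, rfl⟩, ⟨j, rfl⟩⟩ := And.intro iha ihb
    exact ⟨3 * Nat.pair i j + 2 + 5, by rw [PRCode.ofNat]; simp [Nat.mul_add_div]⟩

theorem exists_PRec_oplus_eq_right : ∃ e, ∀ C X, PRec e (oplus C X) = X := by
  have hodd : Nat.Primrec fun n => 2 * n + 1 :=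
    Primrec.nat_iff.1 <| Primrec.nat_add.comp
      (Primrec.nat_mul.comp (Primrec.const 2) Primrec.id) (Primrec.const 1)
  obtain ⟨c, hc⟩ := PRCode.exists_eval_eq_of_primrec hodd
  obtain ⟨e, he⟩ := PRCode.ofNat_surjective (.comp .oracle c)
  refine ⟨e, fun C X => funext fun n => ?_⟩
  simp [PRec, he, PRCode.eval, hc, oplus, Nat.mul_add_div]

theorem wred_afr_bfr_self (A : (ℕ → ℕ) → Q) (C : ℕ → ℕ) : WRed (Afr (Bfr C A)) A := by
  refine ⟨fun Z : ℕ → ℕ => PRec (Z 0) (oplus C (Stream'.tail Z)), ?_, fun _ => le_rfl⟩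
  exact continuous_apply_of_discreteTopology
    (f := fun (Z : ℕ → ℕ) e => PRec e (oplus C (Stream'.tail Z)))
    (fun e => (continuous_PRec e).comp <| (continuous_oplus C).comp continuous_stream_tail)
    (continuous_apply 0)

theorem wred_self_afr_bfr (A : (ℕ → ℕ) → Q) (C : ℕ → ℕ) : WRed A (Afr (Bfr C A)) := by
  obtain ⟨e, he⟩ := exists_PRec_oplus_eq_right
  refine ⟨Stream'.cons e, continuous_stream_cons e, fun X => ?_⟩
  change A X ≤ A (PRec e (oplus C X))
  rw [he]

/-- `𝔄(𝔅^C(𝒜)) ≡_w 𝒜` for every `𝒜 : ℕ^ℕ → Q` and every oracle `C`. -/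
theorem afr_bfr_wadge_equiv {Q : Type*} [Preorder Q] (A : (ℕ → ℕ) → Q) (C : ℕ → ℕ) :
    WRed (Afr (Bfr C A)) A ∧ WRed A (Afr (Bfr C A)) :=
  ⟨wred_afr_bfr_self A C, wred_self_afr_bfr A C⟩

end MO
end

section
/- Let Q be a quasi-order and 𝒜, ℬ : ℕ^ℕ → Q with 𝒜 non-self-dual. If there is a set D ⊆ ℕ^ℕ and a continuous θ : D → ℕ^ℕ such that ℬ(X) ≤_Q 𝒜(θ(X)) for all X ∈ D, and the game G_diag(𝒜, ℬ↾D) is determined, then there is a Lipschitz function θ̂ : ℕ^ℕ → ℕ^ℕ such that ℬ(X) ≤_Q 𝒜(θ̂(X)) for all X ∈ D. -/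
/-!
By determinacy either Player I or Player II wins `G_diag(A, B↾D)`. A winning strategy for I
is itself the required Lipschitz reduction, since I's `n`-th move sees only `n` moves of II.
A winning strategy for II cannot exist: if `Y_X ∈ D` is II's answer to `X`, then
`B(Y_X) ≰ A(X)` and `B(Y_X) ≤ A(θ(Y_X))`, so the continuous map `X ↦ θ(Y_X)` would witness
that `A` is self-dual.
-/

set_option linter.unusedVariables false
open scoped Classical

namespace MO

variable {Q : Type*} [Preorder Q]

/-- Remove the passes (`none`s) from Player II's sequence of moves. -/
noncomputable def stripPass (Y : ℕ → Option ℕ) : ℕ → ℕ :=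
  fun k => (Y (Nat.nth (fun n => (Y n).isSome = true) k)).getD 0

/-- Player II's play against `X` when following strategy `σ` (with passes allowed). -/
def IIplay (σ : List ℕ → Option ℕ) (X : ℕ → ℕ) : ℕ → Option ℕ :=
  fun n => σ (List.ofFn fun i : Fin (n + 1) => X i)

/-- `σ` is a winning strategy for Player II in the Wadge game `G_w(A, B)`. -/
def WinWII (A B : (ℕ → ℕ) → Q) (σ : List ℕ → Option ℕ) : Prop :=
  ∀ X : ℕ → ℕ,
    {n | (IIplay σ X n).isSome}.Infinite ∧
    A X ≤ B (stripPass (IIplay σ X))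

/-- Player I's play (moving first) against Player II's moves `Y`. -/
def Iplay {α : Type*} (τ : List α → ℕ) (Y : ℕ → α) : ℕ → ℕ :=
  fun n => τ (List.ofFn fun i : Fin n => Y i)

/-- `τ` is a winning strategy for Player I in the Wadge game `G_w(A, B)`. -/
def WinWI (A B : (ℕ → ℕ) → Q) (τ : List (Option ℕ) → ℕ) : Prop :=
  ∀ Y : ℕ → Option ℕ,
    ¬ ({n | (Y n).isSome}.Infinite ∧ A (Iplay τ Y) ≤ B (stripPass Y))

/-- `τ` is a winning strategy for Player I in the Lipschitz game `G_lip(A, B)`,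
in which Player II may never pass. -/
def WinLipI (A B : (ℕ → ℕ) → Q) (τ : List ℕ → ℕ) : Prop :=
  ∀ Y : ℕ → ℕ, ¬ A (Iplay τ Y) ≤ B Y

/-- `B` restricted to the cylinder `[σ]`, viewed as a function on Baire space
via the homeomorphism `[σ] ≅ ℕ^ℕ`. -/
def restrTo (B : (ℕ → ℕ) → Q) (σ : List ℕ) : (ℕ → ℕ) → Q :=
  fun X => B fun i => if i < σ.length then σ.getD i 0 else X (i - σ.length)

/-- `A` is self-dual. -/
def SelfDual (A : (ℕ → ℕ) → Q) : Prop :=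
  ∃ θ : (ℕ → ℕ) → ℕ → ℕ, Continuous θ ∧ ∀ X, ¬ A (θ X) ≤ A X

/-- `F` is Lipschitz: `F(X)↾n` depends only on `X↾n`. -/
def LipschitzFn (F : (ℕ → ℕ) → ℕ → ℕ) : Prop :=
  ∀ X Y : ℕ → ℕ, ∀ n, (∀ i < n, X i = Y i) → ∀ i < n, F X i = F Y i

/-- Player II's play in a pass-free game. -/
def IIplayN (σ : List ℕ → ℕ) (X : ℕ → ℕ) : ℕ → ℕ :=
  fun n => σ (List.ofFn fun i : Fin (n + 1) => X i)

/-- `σ` is winning for II in `G_diag(A, B↾D)`: II wins iff `Y ∈ D` and `A(X) ≱ B(Y)`. -/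
def DiagWinII (A B : (ℕ → ℕ) → Q) (D : Set (ℕ → ℕ)) (σ : List ℕ → ℕ) : Prop :=
  ∀ X : ℕ → ℕ, IIplayN σ X ∈ D ∧ ¬ B (IIplayN σ X) ≤ A X

/-- `τ` is winning for I in `G_diag(A, B↾D)`. -/
def DiagWinI (A B : (ℕ → ℕ) → Q) (D : Set (ℕ → ℕ)) (τ : List ℕ → ℕ) : Prop :=
  ∀ Y : ℕ → ℕ, Y ∈ D → B Y ≤ A (Iplay τ Y)

theorem lipschitzFn_Iplay (τ : List ℕ → ℕ) : LipschitzFn (Iplay τ) := by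
  intro X Y n hXY i hi
  simp only [Iplay]
  congr 2
  funext j
  exact hXY j (j.2.trans hi)

theorem continuous_IIplayN (σ : List ℕ → ℕ) : Continuous (IIplayN σ) := by
  refine continuous_pi fun n => ?_
  have hrestrict : Continuous fun X : ℕ → ℕ => fun i : Fin (n + 1) => X i :=
    continuous_pi fun i => continuous_apply _
  exact (continuous_of_discreteTopology (f := fun v : Fin (n + 1) → ℕ => σ (List.ofFn v))).comp
    hrestrict

theorem DiagWinII.selfDual {Q : Type*} [Preorder Q] {A B : (ℕ → ℕ) → Q} {D : Set (ℕ → ℕ)}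
    {σ : List ℕ → ℕ} (hσ : DiagWinII A B D σ) {θ : (ℕ → ℕ) → ℕ → ℕ} (hθc : ContinuousOn θ D)
    (hθ : ∀ X ∈ D, B X ≤ A (θ X)) : SelfDual A :=
  ⟨fun X => θ (IIplayN σ X), hθc.comp_continuous (continuous_IIplayN σ) fun X => (hσ X).1,
    fun X hle => (hσ X).2 ((hθ _ (hσ X).1).trans hle)⟩

/-- If `A` is non-self-dual, continuous reductions into `A` on a domain `D` can be
replaced by Lipschitz ones, granted determinacy of `G_diag(A, B↾D)`. -/
theorem lipschitz_from_continuous {Q : Type*} [Preorder Q] (A B : (ℕ → ℕ) → Q)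
    (D : Set (ℕ → ℕ)) (hA : ¬ SelfDual A)
    (θ : (ℕ → ℕ) → ℕ → ℕ) (hθc : ContinuousOn θ D) (hθ : ∀ X ∈ D, B X ≤ A (θ X))
    (hdet : (∃ τ, DiagWinI A B D τ) ∨ ∃ σ, DiagWinII A B D σ) :
    ∃ F : (ℕ → ℕ) → ℕ → ℕ, LipschitzFn F ∧ ∀ X ∈ D, B X ≤ A (F X) := by
  rcases hdet with ⟨τ, hτ⟩ | ⟨σ, hσ⟩
  · exact ⟨Iplay τ, lipschitzFn_Iplay τ, hτ⟩
  · exact (hA (hσ.selfDual hθc hθ)).elim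

end MO
end

section
/- Every well-quasi-order with no infinite antichains is covered by finitely many directed subsets; in particular, every quasi-order (P, ≤) that is well-founded and has no infinite antichains can be written as a finite union P = D_0 ∪ ... ∪ D_{l-1} where each D_m is directed. -/
set_option linter.unusedVariables false
open scoped Classical

namespace MO

variable {Q : Type*} [Preorder Q]

section DirectedCover

variable {α : Type*} [Preorder α]

theorem wellFoundedLT_of_not_exists_descending {β : Type*} [LT β]
    (h : ¬ ∃ f : ℕ → β, ∀ n, f (n + 1) < f n) : WellFoundedLT β :=
  ⟨wellFounded_iff_isEmpty_descending_chain.2 ⟨fun ⟨f, hf⟩ ↦ h ⟨f, hf⟩⟩⟩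

theorem IsAntichain.finite_of_not_exists_antichain_seq
    (h : ¬ ∃ f : ℕ → α, ∀ i j, i ≠ j → ¬ f i ≤ f j ∧ ¬ f j ≤ f i)
    {s : Set α} (hs : IsAntichain (· ≤ ·) s) : s.Finite := by
  by_contra hinf
  let e := Set.Infinite.natEmbedding s hinf
  refine h ⟨fun i ↦ e i, fun i j hij ↦ ?_⟩
  have hne : (e i : α) ≠ e j := Subtype.val_injective.ne (e.injective.ne hij)
  exact ⟨hs (e i).2 (e j).2 hne, hs (e j).2 (e i).2 hne.symm⟩

/-- From a strictly decreasing chain `sₙ` of lower sets pick `xₙ ∈ sₙ \ sₙ₊₁`; a pair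
`xₘ ≤ xₙ` with `m < n` puts `xₘ` in `sₘ₊₁`. -/
instance LowerSet.wellFoundedLT_of_wellQuasiOrderedLE [WellQuasiOrderedLE α] :
    WellFoundedLT (LowerSet α) := by
  refine ⟨wellFounded_iff_isEmpty_descending_chain.2 ⟨fun ⟨s, hs⟩ ↦ ?_⟩⟩
  have hanti : Antitone s := antitone_nat_of_succ_le fun n ↦ (hs n).le
  choose x hx hx' using fun n ↦ Set.exists_of_ssubset (show (s (n + 1) : Set α) ⊂ s n from hs n)
  obtain ⟨m, n, hmn, hle⟩ := wellQuasiOrdered_le x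
  exact hx' m ((s (m + 1)).lower hle (hanti hmn (hx n)))

def IsFiniteUnionOfDirected (s : Set α) : Prop :=
  ∃ 𝒟 : Set (Set α), 𝒟.Finite ∧ (∀ D ∈ 𝒟, DirectedOn (· ≤ ·) D) ∧ ⋃₀ 𝒟 = s

theorem IsFiniteUnionOfDirected.of_directedOn {s : Set α} (hs : DirectedOn (· ≤ ·) s) :
    IsFiniteUnionOfDirected s :=
  ⟨{s}, Set.finite_singleton s, by simpa using hs, Set.sUnion_singleton s⟩

theorem IsFiniteUnionOfDirected.union {s t : Set α} (hs : IsFiniteUnionOfDirected s)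
    (ht : IsFiniteUnionOfDirected t) : IsFiniteUnionOfDirected (s ∪ t) := by
  obtain ⟨𝒟, h𝒟, h𝒟dir, rfl⟩ := hs
  obtain ⟨ℰ, hℰ, hℰdir, rfl⟩ := ht
  refine ⟨𝒟 ∪ ℰ, h𝒟.union hℰ, ?_, Set.sUnion_union 𝒟 ℰ⟩
  rintro D (hD | hD)
  exacts [h𝒟dir D hD, hℰdir D hD]

theorem IsFiniteUnionOfDirected.exists_fin {s : Set α} (hs : IsFiniteUnionOfDirected s) :
    ∃ (l : ℕ) (D : Fin l → Set α), (∀ m, DirectedOn (· ≤ ·) (D m)) ∧ (⋃ m, D m) = s := by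
  obtain ⟨𝒟, h𝒟, h𝒟dir, rfl⟩ := hs
  obtain ⟨l, D, -, rfl⟩ := h𝒟.fin_param
  exact ⟨l, D, fun m ↦ h𝒟dir _ ⟨m, rfl⟩, (Set.sUnion_range D).symm⟩

theorem LowerSet.erase_sup_erase_of_no_common_upper_bound {s : LowerSet α} {a b : α}
    (hab : ∀ c ∈ s, a ≤ c → ¬ b ≤ c) : s.erase a ⊔ s.erase b = s := by
  ext x
  simp only [LowerSet.coe_sup, LowerSet.coe_erase, Set.mem_union, Set.mem_sdiff,
    UpperSet.mem_Ici_iff, SetLike.mem_coe]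
  by_cases hax : a ≤ x <;> tauto

/-- A lower set `s` that is not directed contains `a, b` with no common upper bound in `s`, so it
is the union of the strictly smaller lower sets `s \ Ici a` and `s \ Ici b`. -/
theorem LowerSet.isFiniteUnionOfDirected [WellFoundedLT (LowerSet α)] (s : LowerSet α) :
    IsFiniteUnionOfDirected (s : Set α) := by
  induction s using WellFoundedLT.induction with
  | ind s ih =>
    by_cases hs : DirectedOn (· ≤ ·) (s : Set α)
    · exact .of_directedOn hs
    obtain ⟨a, ha, b, hb, hab⟩ : ∃ a ∈ s, ∃ b ∈ s, ∀ c ∈ s, a ≤ c → ¬ b ≤ c := by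
      simpa [DirectedOn] using hs
    rw [← LowerSet.erase_sup_erase_of_no_common_upper_bound hab, LowerSet.coe_sup]
    exact (ih _ (LowerSet.erase_lt.2 ha)).union (ih _ (LowerSet.erase_lt.2 hb))

end DirectedCover

/-- Erdős–Tarski: a well-founded quasi-order with no infinite antichains is a finite
union of directed subsets. -/
theorem erdos_tarski_directed_cover {α : Type*} [Preorder α]
    (hwf : ¬ ∃ f : ℕ → α, ∀ n, f (n + 1) < f n)
    (hac : ¬ ∃ f : ℕ → α, ∀ i j, i ≠ j → ¬ f i ≤ f j ∧ ¬ f j ≤ f i) :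
    ∃ (l : ℕ) (D : Fin l → Set α),
      (∀ m, DirectedOn (· ≤ ·) (D m)) ∧ (⋃ m, D m) = Set.univ := by
  have : WellQuasiOrderedLE α := wellQuasiOrderedLE_iff.2
    ⟨wellFoundedLT_of_not_exists_descending hwf,
      fun _ hs ↦ IsAntichain.finite_of_not_exists_antichain_seq hac hs⟩
  simpa using (LowerSet.isFiniteUnionOfDirected (⊤ : LowerSet α)).exists_fin

end MO
end

section
/- Let Q be a quasi-order and 𝒜, ℬ : ℕ^ℕ → Q such that ℬ is σ-join-irreducible, witnessed by Z ∈ ℕ^ℕ with ℬ ≤_w ℬ↾[Z↾n] for every n. If Player II has a winning strategy in the Wadge game G_w(𝒜, ℬ), then Player II has a winning strategy in the game G_m(𝒜, ℬ) where II cannot pass on the first move. -/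
set_option linter.unusedVariables false
open scoped Classical

namespace MO

variable {Q : Type*} [Preorder Q]

/-!
By σ-join-irreducibility at `n = 1` there is a continuous `θ` with `B ≤ B↾[Z 0] ∘ θ`, so
`X ↦ Z 0 ⌢ θ (Y^p)`, where `Y` is the play of II's winning strategy against `X`, is a continuous
reduction of `A` to `B` whose first value does not depend on `X`. Any continuous reduction `F`
gives II a winning strategy: write `F X` one coordinate at a time, passing until the next
coordinate is determined by I's moves so far. A constant first coordinate is determined
before I's first move, so II never needs to pass there.
-/

open PiNat

lemma mem_cylinder_trans {E : ℕ → Type*} {x y z : ∀ n, E n} {n : ℕ} (hz : z ∈ cylinder y n)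
    (hy : y ∈ cylinder x n) : z ∈ cylinder x n :=
  mem_cylinder_iff_eq.2 ((mem_cylinder_iff_eq.1 hz).trans (mem_cylinder_iff_eq.1 hy))

theorem continuous_iff_forall_exists_cylinder {E : ℕ → Type*} [∀ n, TopologicalSpace (E n)]
    [∀ n, DiscreteTopology (E n)] {α : Type*} [TopologicalSpace α] [DiscreteTopology α]
    {f : (∀ n, E n) → α} :
    Continuous f ↔ ∀ x, ∃ n, ∀ y ∈ cylinder x n, f y = f x := by
  refine ⟨fun hf x => ?_, fun h => continuous_discrete_rng.2 fun a => ?_⟩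
  · obtain ⟨_, ⟨y, n, rfl⟩, hx, hsub⟩ := isTopologicalBasis_cylinders E
      |>.exists_subset_of_mem_open (Set.mem_singleton (f x)) ((isOpen_discrete _).preimage hf)
    exact ⟨n, fun z hz => hsub (mem_cylinder_trans hz hx)⟩
  · refine isOpen_iff_forall_mem_open.2 fun x hx => ?_
    obtain ⟨n, hn⟩ := h x
    exact ⟨cylinder x n, fun y hy => (hn y hy).trans hx, isOpen_cylinder E x n,
      self_mem_cylinder x n⟩

theorem stripPass_congr {Y Y' : ℕ → Option ℕ} (hY : {n | (Y n).isSome}.Infinite) {k : ℕ}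
    (h : ∀ j ≤ Nat.nth (fun n => (Y n).isSome) k, Y' j = Y j) :
    stripPass Y' k = stripPass Y k := by
  set N := Nat.nth (fun n => (Y n).isSome) k
  have hcount : Nat.count (fun n => (Y' n).isSome) N = Nat.count (fun n => (Y n).isSome) N := by
    simp only [Nat.count_eq_card_filter_range]
    exact congrArg _ (Finset.filter_congr fun j hj => by rw [h j (Finset.mem_range.1 hj).le])
  have hN' : (Y' N).isSome := by rw [h N le_rfl]; exact Nat.nth_mem_of_infinite hY k
  have hnth : Nat.nth (fun n => (Y' n).isSome) k = N := by
    calc Nat.nth (fun n => (Y' n).isSome) k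
        = Nat.nth (fun n => (Y' n).isSome) (Nat.count (fun n => (Y' n).isSome) N) := by
          rw [hcount, Nat.count_nth_of_infinite hY]
      _ = N := Nat.nth_count hN'
  simp only [stripPass, hnth, h N le_rfl, N]

section Steps

variable {c : ℕ → ℕ} {Y : ℕ → Option ℕ} {g : ℕ → ℕ}
  (hstep : ∀ n, c (n + 1) = c n ∨ c (n + 1) = c n + 1) (hunb : ∀ k, ∃ n, k ≤ c n)
  (hY : ∀ n, Y n = if c n < c (n + 1) then some (g (c n)) else none)

include hY in
lemma isSome_iff_lt_succ (n : ℕ) : (Y n).isSome ↔ c n < c (n + 1) := by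
  rw [hY n]; split <;> simp_all

include hstep

lemma monotone_of_step : Monotone c :=
  monotone_nat_of_le_succ fun n => by rcases hstep n with h | h <;> omega

include hunb in
lemma exists_eq_and_succ_eq {k : ℕ} (hk : c 0 ≤ k) : ∃ n, c n = k ∧ c (n + 1) = k + 1 := by
  have hex : ∃ n, k < c n := hunb (k + 1)
  obtain ⟨n, hn⟩ : ∃ n, Nat.find hex = n + 1 :=
    Nat.exists_eq_succ_of_ne_zero (Nat.find_pos hex |>.2 (by omega)).ne'
  have hlt : k < c (n + 1) := by rw [← hn]; exact Nat.find_spec hex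
  have hle : ¬ k < c n := Nat.find_min hex (by rw [hn]; omega)
  exact ⟨n, by rcases hstep n with h | h <;> omega⟩

include hY

include hunb in
lemma infinite_isSome_of_step : {n | (Y n).isSome}.Infinite := by
  refine Set.infinite_of_forall_exists_gt fun a => ?_
  obtain ⟨n, hn, hn1⟩ :=
    exists_eq_and_succ_eq hstep hunb (monotone_of_step hstep (Nat.zero_le (a + 1)))
  refine ⟨n, (isSome_iff_lt_succ hY n).2 (by omega), ?_⟩
  by_contra! hna
  have := monotone_of_step hstep (by omega : n + 1 ≤ a + 1)
  omega

lemma count_isSome_of_step (hc0 : c 0 = 0) (n : ℕ) :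
    Nat.count (fun n => (Y n).isSome) n = c n := by
  induction n with
  | zero => exact hc0.symm
  | succ n ih =>
    rw [Nat.count_succ, ih]
    rcases hstep n with h | h <;> simp [hY n, h]

include hunb in
lemma stripPass_eq_of_step (hc0 : c 0 = 0) : stripPass Y = g := by
  funext k
  obtain ⟨n, hn, hn1⟩ := exists_eq_and_succ_eq hstep hunb (hc0 ▸ Nat.zero_le k)
  have hsome : (Y n).isSome := (isSome_iff_lt_succ hY n).2 (by omega)
  have hnth : Nat.nth (fun n => (Y n).isSome) k = n := by
    rw [← hn, ← count_isSome_of_step hstep hY hc0]; exact Nat.nth_count hsome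
  simp only [stripPass, hnth, hY n, hn, hn1, Nat.lt_succ_self, if_true, Option.getD_some]

end Steps

lemma IIplay_eq_of_mem_cylinder (σ : List ℕ → Option ℕ) {X Y : ℕ → ℕ} {n j : ℕ}
    (hY : Y ∈ cylinder X n) (hj : j < n) : IIplay σ Y j = IIplay σ X j := by
  simp only [IIplay]
  congr 2
  funext i
  exact hY i (by omega)

theorem continuous_stripPass_IIplay {σ : List ℕ → Option ℕ}
    (hσ : ∀ X, {n | (IIplay σ X n).isSome}.Infinite) :
    Continuous fun X => stripPass (IIplay σ X) :=
  continuous_pi fun k => continuous_iff_forall_exists_cylinder.2 fun X =>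
    ⟨Nat.nth (fun n => (IIplay σ X n).isSome) k + 1, fun _ hY =>
      stripPass_congr (hσ X) fun _ hj => IIplay_eq_of_mem_cylinder σ hY (by omega)⟩

theorem continuous_prepend (l : List ℕ) :
    Continuous fun (Y : ℕ → ℕ) (i : ℕ) => if i < l.length then l.getD i 0 else Y (i - l.length) :=
  continuous_pi fun i => by split_ifs; exacts [continuous_const, continuous_apply _]

section Follow

variable {F : (ℕ → ℕ) → ℕ → ℕ}

def Determines (F : (ℕ → ℕ) → ℕ → ℕ) (X : ℕ → ℕ) (n k : ℕ) : Prop :=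
  ∀ Y ∈ cylinder X n, F Y k = F X k

lemma Determines.mono {X : ℕ → ℕ} {m n k : ℕ} (h : Determines F X m k) (hmn : m ≤ n) :
    Determines F X n k :=
  fun Y hY => h Y (cylinder_anti X hmn hY)

lemma Determines.of_mem_cylinder {X Y : ℕ → ℕ} {n k : ℕ} (h : Determines F X n k)
    (hY : Y ∈ cylinder X n) : Determines F Y n k := fun W hW =>
  (h W (mem_cylinder_trans hW hY)).trans (h Y hY).symm

lemma determines_of_continuous (hF : Continuous F) (X : ℕ → ℕ) (k : ℕ) :
    ∃ n, Determines F X n k :=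
  continuous_iff_forall_exists_cylinder.1 ((continuous_apply k).comp hF) X

noncomputable def detCount (F : (ℕ → ℕ) → ℕ → ℕ) (X : ℕ → ℕ) : ℕ → ℕ
  | 0 => 0
  | n + 1 =>
    if Determines F X (n + 1) (detCount F X n) then detCount F X n + 1 else detCount F X n

lemma detCount_succ_eq_or (X : ℕ → ℕ) (n : ℕ) :
    detCount F X (n + 1) = detCount F X n ∨ detCount F X (n + 1) = detCount F X n + 1 := by
  rw [detCount]; split_ifs <;> simp

lemma determines_of_detCount_lt {X : ℕ → ℕ} {n : ℕ}
    (h : detCount F X n < detCount F X (n + 1)) : Determines F X (n + 1) (detCount F X n) := by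
  rw [detCount] at h; split_ifs at h with hd; exacts [hd, absurd h (lt_irrefl _)]

lemma detCount_congr {X Y : ℕ → ℕ} {n : ℕ} (hY : Y ∈ cylinder X n) :
    ∀ m ≤ n, detCount F Y m = detCount F X m
  | 0, _ => rfl
  | m + 1, hm => by
    have hYm : Y ∈ cylinder X (m + 1) := cylinder_anti X hm hY
    have hdet :
        Determines F Y (m + 1) (detCount F X m) ↔ Determines F X (m + 1) (detCount F X m) :=
      ⟨fun h => h.of_mem_cylinder ((mem_cylinder_comm X Y _).1 hYm), fun h => h.of_mem_cylinder hYm⟩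
    simp only [detCount, detCount_congr hY m (by omega), hdet]

lemma exists_le_detCount (hF : Continuous F) (X : ℕ → ℕ) (k : ℕ) : ∃ n, k ≤ detCount F X n := by
  induction k with
  | zero => exact ⟨0, le_rfl⟩
  | succ k ih =>
    obtain ⟨n₀, hn₀⟩ := ih
    obtain ⟨m, hm⟩ := determines_of_continuous hF X k
    set N := max n₀ m
    have hmono := monotone_of_step (detCount_succ_eq_or (F := F) X)
    by_cases hN : k < detCount F X N
    · exact ⟨N, hN⟩
    · have hNk : detCount F X N = k :=
        le_antisymm (not_lt.1 hN) (hn₀.trans (hmono (le_max_left _ _)))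
      refine ⟨N + 1, ?_⟩
      rw [detCount, hNk, if_pos (hm.mono (by omega))]

/-- Positions in the game are nonempty, so `l.length - 1` never truncates. -/
noncomputable def followStrategy (F : (ℕ → ℕ) → ℕ → ℕ) (l : List ℕ) : Option ℕ :=
  let X := fun i => l.getD i 0
  let n := l.length - 1
  if detCount F X n < detCount F X (n + 1) then some (F X (detCount F X n)) else none

lemma IIplay_followStrategy (X : ℕ → ℕ) (n : ℕ) :
    IIplay (followStrategy F) X n =
      if detCount F X n < detCount F X (n + 1) then some (F X (detCount F X n)) else none := by
  set X' : ℕ → ℕ := fun i => (List.ofFn fun i : Fin (n + 1) => X i).getD i 0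
  have hX' : X' ∈ cylinder X (n + 1) := fun i hi => by
    simp only [X']
    rw [List.getD_eq_getElem _ _ (by rw [List.length_ofFn]; exact hi), List.getElem_ofFn]
  simp only [IIplay, followStrategy, List.length_ofFn, Nat.add_sub_cancel]
  rw [detCount_congr hX' n n.le_succ, detCount_congr hX' (n + 1) le_rfl]
  split_ifs with h
  · exact congrArg some (determines_of_detCount_lt h X' hX')
  · rfl

end Follow

theorem winWII_followStrategy {A B : (ℕ → ℕ) → Q} {F : (ℕ → ℕ) → ℕ → ℕ} (hF : Continuous F)
    (hAB : ∀ X, A X ≤ B (F X)) : WinWII A B (followStrategy F) := fun X =>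
  have hplay := IIplay_followStrategy X
  have hstep := detCount_succ_eq_or (F := F) X
  have hunb := exists_le_detCount hF X
  ⟨infinite_isSome_of_step hstep hunb hplay,
    stripPass_eq_of_step hstep hunb hplay rfl ▸ hAB X⟩

lemma followStrategy_singleton_isSome {F : (ℕ → ℕ) → ℕ → ℕ} (hF : ∀ X Y, F X 0 = F Y 0)
    (x : ℕ) : (followStrategy F [x]).isSome := by
  have hdet : ∀ X, Determines F X 1 0 := fun X Y _ => hF Y X
  simp [followStrategy, detCount, hdet]

/-- If `B` is σ-join-irreducible (witnessed by `Z` with `B ≤_w B↾[Z↾n]` for all `n`)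
and II wins `G_w(A, B)`, then II wins `G_m(A, B)` (no pass on the first move). -/
theorem sji_no_first_pass {Q : Type*} [Preorder Q] (A B : (ℕ → ℕ) → Q) (Z : ℕ → ℕ)
    (hsji : ∀ n : ℕ, WRed B (restrTo B (List.ofFn fun i : Fin n => Z i)))
    (hwin : ∃ σ, WinWII A B σ) :
    ∃ σ : List ℕ → Option ℕ, (∀ x : ℕ, (σ [x]).isSome) ∧ WinWII A B σ := by
  obtain ⟨σ, hσ⟩ := hwin
  obtain ⟨θ, hθ, hθB⟩ := hsji 1
  set l := List.ofFn fun i : Fin 1 => Z i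
  set F : (ℕ → ℕ) → ℕ → ℕ := fun X i =>
    if i < l.length then l.getD i 0 else θ (stripPass (IIplay σ X)) (i - l.length)
  have hF : Continuous F :=
    (continuous_prepend l).comp (hθ.comp (continuous_stripPass_IIplay fun X => (hσ X).1))
  exact ⟨followStrategy F, followStrategy_singleton_isSome fun X Y => by simp [F, l],
    winWII_followStrategy hF fun X => (hσ X).2.trans (hθB _)⟩

end MO
end
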